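/- arXiv:0811.3199 — 3 statements merged into one kernel-verified Lean document; each statement's English description precedes it below -/
import Mathlib

section
/- For m > 0, a > 1, A ≥ A_1 > 0, and v ≥ 0 satisfying v ≤ (1/A_1 - 1/A)·[1/2 + 4m a^2(a^2+1)/(a^2-1)^2] and -1 = v - (1/A_1)·[1/2 + m^2 a/2 + 4m a^2/(a^2-1)] and 16a ≤ m(a^2-1)^2, one has A ≥ 1/2 + 4m a^2(a^2+1)/(a^2-1)^2. -/
theorem lower_bound_A (m a A A₁ v : ℝ) (hm : 0 < m) (ha : 1 < a)
    (hA1 : 0 < A₁) (hAA1 : A₁ ≤ A) (hv : 0 ≤ v)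
    (h1 : v ≤ (1/A₁ - 1/A) * (1/2 + 4*m*a^2*(a^2+1)/(a^2-1)^2))
    (h2 : -1 = v - (1/A₁) * (1/2 + m^2*a/2 + 4*m*a^2/(a^2-1)))
    (h3 : 16*a ≤ m*(a^2-1)^2) :
    A ≥ 1/2 + 4*m*a^2*(a^2+1)/(a^2-1)^2 := by
  have hA : 0 < A := lt_of_lt_of_le hA1 hAA1
  have hd : 0 < a^2 - 1 := by nlinarith
  set C : ℝ := 1/2 + 4*m*a^2*(a^2+1)/(a^2-1)^2 with hC
  set D : ℝ := 1/2 + m^2*a/2 + 4*m*a^2/(a^2-1) with hD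
  have hDC : C ≤ D := by
    rw [hC, hD]
    have h4 : D - C = (m*a/2) * (m*(a^2-1)^2 - 16*a) / (a^2-1)^2 := by
      rw [hC, hD]; field_simp; ring
    have : 0 ≤ (m*a/2) * (m*(a^2-1)^2 - 16*a) / (a^2-1)^2 := by
      apply div_nonneg
      · apply mul_nonneg
        · positivity
        · linarith
      · positivity
    linarith [h4, this]
  -- from h2: v = D/A₁ - 1
  have hv2 : v = (1/A₁) * D - 1 := by linarith
  have hkey : C/A ≤ 1 - (D - C)/A₁ := by
    rw [hv2] at h1
    have h5 : (1/A₁ - 1/A) * C = C/A₁ - C/A := by ring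
    have h6 : (1/A₁) * D = D/A₁ := by ring
    rw [h5, h6] at h1
    have : (D - C)/A₁ = D/A₁ - C/A₁ := by ring
    linarith
  have h7 : 0 ≤ (D - C)/A₁ := div_nonneg (by linarith) hA1.le
  have h8 : C/A ≤ 1 := by linarith
  rw [ge_iff_le, ← div_le_one hA]
  exact h8
end

section
/- Let Q_1, Q_2, P_1, P_2 satisfy the regularized equations of motion (7)-(10) of the paper. Then along any solution, (P_1 Q_1 + P_2 Q_2)' = 4m Q_2^2 + 2m^2 Q_1^2 + 2Q_1^2 Q_2^2 [2m/(Q_1^2+Q_2^2) + 1/(2Q_1^2+Q_2^2) - 2]. -/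
theorem derivative_identity (m Q₁ Q₂ P₁ P₂ : ℝ) (hm : 0 < m)
    (h0 : Q₁^2 + Q₂^2 ≠ 0) :
    ((1/(4*m))*P₁*P₂*Q₂ - (1/(2*m))*Q₁*P₂^2 + 2*m^2*Q₁
        + 4*m*Q₁*Q₂^4/(Q₁^2+Q₂^2)^2 + 2*Q₁*Q₂^4/(2*Q₁^2+Q₂^2)^2 - 2*Q₁*Q₂^2) * Q₁
    + P₁ * (((1+m)/(8*m))*Q₂^2*P₁ - (1/(4*m))*Q₁*Q₂*P₂)
    + ((1/(4*m))*P₁*P₂*Q₁ - ((1+m)/(8*m))*Q₂*P₁^2 + 4*m*Q₂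
        + 4*m*Q₁^4*Q₂/(Q₁^2+Q₂^2)^2 + 4*Q₁^4*Q₂/(2*Q₁^2+Q₂^2)^2 - 2*Q₁^2*Q₂) * Q₂
    + P₂ * ((1/(2*m))*Q₁^2*P₂ - (1/(4*m))*Q₁*Q₂*P₁)
      = 4*m*Q₂^2 + 2*m^2*Q₁^2
        + 2*Q₁^2*Q₂^2*(2*m/(Q₁^2+Q₂^2) + 1/(2*Q₁^2+Q₂^2) - 2) := by
  have h1 : Q₁^2 + Q₂^2 > 0 := by positivity
  have h2 : 2*Q₁^2 + Q₂^2 > 0 := by nlinarith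
  field_simp
  ring
end

section
/- If 0 ≤ Q_1 ≤ R, 0 < Q_2 < √2·R, not both Q_1 = Q_2 = 0, and R = √(m/3) with m > 0, then 2m/(Q_1^2+Q_2^2) + 1/(2Q_1^2+Q_2^2) - 2 ≥ 3/(4m) > 0. -/
theorem key_estimate (m R Q₁ Q₂ : ℝ) (hm : 0 < m)
    (hQ1 : 0 ≤ Q₁) (hQ1R : Q₁ ≤ R) (hQ2 : 0 < Q₂) (hQ2R : Q₂ < Real.sqrt 2 * R)
    (hR : R = Real.sqrt (m/3)) :
    2*m/(Q₁^2+Q₂^2) + 1/(2*Q₁^2+Q₂^2) - 2 ≥ 3/(4*m) ∧ (3:ℝ)/(4*m) > 0 := by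
  have hR2 : R^2 = m/3 := by
    rw [hR, Real.sq_sqrt (by linarith : (0:ℝ) ≤ m/3)]
  have h1 : Q₁^2 ≤ m/3 := by
    have := pow_le_pow_left₀ hQ1 hQ1R 2
    linarith [hR2 ▸ this]
  have h2 : Q₂^2 < 2*m/3 := by
    have hs : (Real.sqrt 2 * R)^2 = 2 * (m/3) := by
      rw [mul_pow, Real.sq_sqrt (by norm_num : (0:ℝ) ≤ 2), hR2]
    have := pow_lt_pow_left₀ hQ2R hQ2.le two_ne_zero
    rw [hs] at this
    linarith
  have hA : 0 < Q₁^2 + Q₂^2 := by positivity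
  have hB : 0 < 2*Q₁^2 + Q₂^2 := by positivity
  have hAm : Q₁^2 + Q₂^2 ≤ m := by linarith
  have hBm : 2*Q₁^2 + Q₂^2 ≤ 4*m/3 := by linarith
  constructor
  · have e1 : 2*m/(Q₁^2+Q₂^2) ≥ 2 := by
      rw [ge_iff_le, le_div_iff₀ hA]; linarith
    have e2 : 1/(2*Q₁^2+Q₂^2) ≥ 3/(4*m) := by
      rw [ge_iff_le, div_le_div_iff₀ (by linarith) hB]; linarith
    linarith
  · positivity
end
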